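/- arXiv:2105.03137 — 3 statements merged into one kernel-verified Lean document; each statement's English description precedes it below -/
import Mathlib

section
/- For positive semidefinite Hermitian matrices A and B of the same size n, log det(I + A + B) - log det(I + B) is at most the sum over i of log(1 + λ_i(A)), where λ_i(A) are the eigenvalues of A. -/
/-!
With `S = 1 + B` and `Q = √A`, Sylvester's identity gives
`det (S + A) = det S · det (1 + S⁻¹ Q Q) = det S · det (1 + Q S⁻¹ Q)`.
From `S ≥ 1` we get `S⁻¹ ≤ 1`, hence `Q S⁻¹ Q ≤ Q Q = A`. The determinant is monotone in the
Loewner order, so `det (1 + A + B) ≤ det (1 + B) · det (1 + A)`, and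
`det (1 + A) = ∏ (1 + λᵢ(A))`.
-/

open Matrix ComplexOrder
open scoped MatrixOrder

namespace Matrix

variable {𝕜 n : Type*} [RCLike 𝕜] [DecidableEq n]

lemma posDef_of_one_le {S : Matrix n n 𝕜} (h : 1 ≤ S) : S.PosDef := by
  simpa using PosDef.one.add_posSemidef (le_iff.1 h)

variable [Fintype n]

lemma nonsing_inv_le_one_of_one_le {S : Matrix n n 𝕜} (h : 1 ≤ S) : S⁻¹ ≤ 1 := by
  have hS := posDef_of_one_le h
  have hspec := (CFC.one_le_iff (R := ℝ) S hS.isHermitian.isSelfAdjoint).1 h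
  have hcont : ContinuousOn (fun x : ℝ ↦ x⁻¹) (spectrum ℝ S) :=
    continuousOn_inv₀.mono fun x hx ↦ (zero_lt_one.trans_le (hspec x hx)).ne'
  rw [nonsing_inv_eq_ringInverse, ← cfc_ringInverse_id (R := ℝ) S hS.isUnit,
    cfc_le_one_iff _ _ hcont hS.isHermitian.isSelfAdjoint]
  exact fun x hx ↦ inv_le_one_of_one_le₀ (hspec x hx)

lemma det_le_one_of_le_one {P : Matrix n n 𝕜} (hP : 0 ≤ P) (hP1 : P ≤ 1) : P.det ≤ 1 := by
  have hH : P.IsHermitian := hP.posSemidef.isHermitian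
  rw [hH.det_eq_prod_eigenvalues, ← RCLike.ofReal_prod, ← RCLike.ofReal_one,
    RCLike.ofReal_le_ofReal]
  refine Finset.prod_le_one (fun i _ ↦ hP.posSemidef.eigenvalues_nonneg i) fun i _ ↦ ?_
  exact (CFC.le_one_iff P hH.isSelfAdjoint).1 hP1 _ (hH.eigenvalues_mem_spectrum_real i)

lemma det_le_det_of_le {M N : Matrix n n 𝕜} (hM : 0 ≤ M) (hN : N.PosDef) (hMN : M ≤ N) :
    M.det ≤ N.det := by
  obtain ⟨D, hD, rfl⟩ :=
    CStarAlgebra.isStrictlyPositive_iff_eq_star_mul_self.mp hN.isStrictlyPositive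
  have hDdet : IsUnit D.det := (isUnit_iff_isUnit_det D).1 hD
  have hDD : D * D⁻¹ = 1 := mul_nonsing_inv D hDdet
  have hDD' : D⁻¹ * D = 1 := nonsing_inv_mul D hDdet
  set P := star D⁻¹ * M * D⁻¹
  have hMP : M = star D * P * D := by
    simp only [P, ← mul_assoc, ← star_mul, hDD', star_one, one_mul]
    rw [mul_assoc, hDD', mul_one]
  have hP1 : P ≤ 1 := by
    have := star_left_conjugate_le_conjugate hMN D⁻¹
    rwa [← mul_assoc, ← star_mul, hDD, star_one, one_mul, hDD] at this
  calc M.det = (star D * D).det * P.det := by rw [hMP]; simp only [det_mul]; ring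
    _ ≤ (star D * D).det * 1 :=
      mul_le_mul_of_nonneg_left (det_le_one_of_le_one (star_left_conjugate_nonneg hM _) hP1)
        hN.posSemidef.det_nonneg
    _ = (star D * D).det := mul_one _

lemma det_add_le_det_mul_det_one_add {S A : Matrix n n 𝕜} (hS : 1 ≤ S) (hA : 0 ≤ A) :
    (S + A).det ≤ S.det * (1 + A).det := by
  have hSpd := posDef_of_one_le hS
  set Q := CFC.sqrt A
  have hQ : IsSelfAdjoint Q := IsSelfAdjoint.of_nonneg (CFC.sqrt_nonneg A)
  have hQQ : Q * Q = A := CFC.sqrt_mul_sqrt_self A hA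
  have hfactor : (S + A).det = S.det * (1 + Q * S⁻¹ * Q).det := by
    have hSA : S + A = S * (1 + S⁻¹ * (Q * Q)) := by
      rw [hQQ, mul_add, mul_one,
        mul_nonsing_inv_cancel_left S A ((isUnit_iff_isUnit_det S).1 hSpd.isUnit)]
    rw [hSA, det_mul, ← mul_assoc, det_one_add_mul_comm, mul_assoc]
  have hconj : Q * S⁻¹ * Q ≤ A := by
    simpa [hQQ] using hQ.conjugate_le_conjugate (nonsing_inv_le_one_of_one_le hS)
  have hnonneg : 0 ≤ 1 + Q * S⁻¹ * Q :=
    add_nonneg zero_le_one (hQ.conjugate_nonneg hSpd.inv.posSemidef.nonneg)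
  rw [hfactor]
  exact mul_le_mul_of_nonneg_left
    (det_le_det_of_le hnonneg (PosDef.one.add_posSemidef hA.posSemidef) (add_le_add_right hconj 1))
    hSpd.posSemidef.det_nonneg

lemma IsHermitian.det_one_add_eq_prod_one_add_eigenvalues {A : Matrix n n 𝕜}
    (hA : A.IsHermitian) :
    (1 + A).det = ((∏ i, (1 + hA.eigenvalues i) : ℝ) : 𝕜) := by
  have := congrArg (Polynomial.eval 1) (hA.charpoly_cfc_eq (fun x ↦ -x))
  rw [cfc_neg_id A hA.isSelfAdjoint, eval_charpoly, map_one, sub_neg_eq_add] at this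
  simpa [Polynomial.eval_prod] using this

end Matrix

/-- For positive semidefinite Hermitian `A`, `B`,
`log det (I + A + B) - log det (I + B) ≤ ∑ i, log (1 + λᵢ(A))`. -/
theorem logdet_add_sub_le_sum_log_eigenvalues
    (n : ℕ) (A B : Matrix (Fin n) (Fin n) ℂ)
    (hA : A.PosSemidef) (hB : B.PosSemidef) :
    Real.log ((1 + A + B).det.re) - Real.log ((1 + B).det.re) ≤
      ∑ i, Real.log (1 + hA.1.eigenvalues i) := by
  have hX := Complex.lt_def.1 ((PosDef.one.add_posSemidef hA).add_posSemidef hB).det_pos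
  have hY := Complex.lt_def.1 (PosDef.one.add_posSemidef hB).det_pos
  have hev (i : Fin n) : 0 < 1 + hA.1.eigenvalues i := by linarith [hA.eigenvalues_nonneg i]
  have hZ : (1 + A).det.re = ∏ i, (1 + hA.1.eigenvalues i) := by
    rw [hA.1.det_one_add_eq_prod_one_add_eigenvalues, ← RCLike.re_to_complex, RCLike.ofReal_re]
  have hkey : (1 + A + B).det.re ≤ (1 + B).det.re * (1 + A).det.re := by
    have h := Complex.re_le_re <|
      det_add_le_det_mul_det_one_add (le_add_of_nonneg_right hB.nonneg) hA.nonneg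
    rwa [add_right_comm, Complex.mul_re, ← hY.2, Complex.zero_im, zero_mul, sub_zero] at h
  calc Real.log ((1 + A + B).det.re) - Real.log ((1 + B).det.re)
      ≤ Real.log ((1 + B).det.re * (1 + A).det.re) - Real.log ((1 + B).det.re) := by
        gcongr
        exact hX.1
    _ = ∑ i, Real.log (1 + hA.1.eigenvalues i) := by
        rw [Real.log_mul hY.1.ne' (hZ ▸ Finset.prod_pos fun i _ ↦ hev i).ne', hZ,
          Real.log_prod fun i _ ↦ (hev i).ne']
        ring
end

section
/- Let G be an n×n invertible complex matrix with singular values σ_1 ≥ ... ≥ σ_n, and let Q_s be a positive semidefinite Hermitian matrix with eigenvalues p_1 ≥ ... ≥ p_n. Then log det(I + G Q_s G†) ≤ Σ_{i=1}^n log(1 + σ_i² p_i). -/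
open Matrix ComplexOrder

/-!
Write `G = W Σ Vᴴ` and `Qs = T P Tᴴ`. Sylvester's identity `det (1 + X Y) = det (1 + Y X)` turns
`det (1 + G Qs Gᴴ)` into `det (1 + Σ² U P Uᴴ)` with `U = Vᴴ T` unitary, so it suffices to show
`det (1 + A C B Cᴴ) ≤ ∏ i, (1 + aᵢ bᵢ)` for diagonal `A`, `B` with nonnegative antitone entries
and every `C` with `Cᴴ C ≤ 1` and `C Cᴴ ≤ 1`. This goes by induction on the dimension.
Splitting off `β = min b` from `b`, the Loewner bound `C B Cᴴ ≤ β + C (B - β) Cᴴ` and the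
monotonicity of `det` on positive definite matrices give
`det (1 + A C B Cᴴ) ≤ ∏ i, (1 + β aᵢ) · det (1 + A' C (B - β) Cᴴ)` with `a' = a / (1 + β a)`,
again antitone. Peeling the minimum of `a'` in the same way, with the roles of `C` and `Cᴴ`
exchanged, leaves weights that both vanish at the last index; the determinant then only sees the
compression of `C` to the remaining coordinates, which again satisfies both bounds, and the
peeled factors multiply back to `∏ i, (1 + aᵢ bᵢ)`.
-/

lemma antitone_div_one_add_mul {ι : Type*} [Preorder ι] {a : ι → ℝ} (ha : Antitone a)
    (ha₀ : 0 ≤ a) {β : ℝ} (hβ : 0 ≤ β) : Antitone fun i => a i / (1 + β * a i) := by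
  intro i j hij
  have hi := mul_nonneg hβ (ha₀ i)
  have hj := mul_nonneg hβ (ha₀ j)
  rw [div_le_div_iff₀ (by linarith) (by linarith)]
  nlinarith [ha hij]

lemma one_add_mul_eq_peel_peel {a b α β : ℝ} (h₁ : 1 + β * a ≠ 0) (h₂ : 1 + α * (b - β) ≠ 0) :
    (1 + β * a) * (1 + α * (b - β)) *
      (1 + (a / (1 + β * a) - α) * ((b - β) / (1 + α * (b - β)))) = 1 + a * b := by
  field_simp
  ring

namespace Matrix

section RealDiagonal

variable {ι κ : Type*} [DecidableEq ι]

noncomputable def realDiagonal (a : ι → ℝ) : Matrix ι ι ℂ := diagonal fun i => (a i : ℂ)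

lemma conjTranspose_realDiagonal (a : ι → ℝ) : (realDiagonal a)ᴴ = realDiagonal a := by
  simp [realDiagonal]

lemma realDiagonal_mul_realDiagonal [Fintype ι] (a b : ι → ℝ) :
    realDiagonal a * realDiagonal b = realDiagonal (a * b) := by
  simp [realDiagonal]

lemma det_realDiagonal [Fintype ι] (a : ι → ℝ) : (realDiagonal a).det = ((∏ i, a i : ℝ) : ℂ) := by
  simp [realDiagonal]

lemma posSemidef_realDiagonal {a : ι → ℝ} (ha : 0 ≤ a) : (realDiagonal a).PosSemidef :=
  PosSemidef.diagonal fun i => Complex.zero_le_real.mpr (ha i)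

lemma realDiagonal_sqrt_mul_self [Fintype ι] {a : ι → ℝ} (ha : 0 ≤ a) :
    realDiagonal (fun i => √(a i)) * realDiagonal (fun i => √(a i)) = realDiagonal a := by
  rw [realDiagonal_mul_realDiagonal]
  congr 1
  ext i
  exact Real.mul_self_sqrt (ha i)

lemma realDiagonal_eq_smul_one_add (β : ℝ) (b : ι → ℝ) :
    realDiagonal b = β • 1 + realDiagonal (fun i => b i - β) := by
  ext i j
  by_cases h : i = j <;> simp [realDiagonal, h]

lemma realDiagonal_one_add_mul (β : ℝ) (a : ι → ℝ) :
    realDiagonal (fun i => 1 + β * a i) = 1 + β • realDiagonal a := by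
  ext i j
  by_cases h : i = j <;> simp [realDiagonal, h]

lemma realDiagonal_eq_one_submatrix_mul [Fintype κ] [DecidableEq κ] {e : κ → ι}
    (he : Function.Injective e) {a : ι → ℝ} (ha : ∀ i ∉ Set.range e, a i = 0) :
    realDiagonal a = (1 : Matrix ι ι ℂ).submatrix id e * realDiagonal (a ∘ e) *
      ((1 : Matrix ι ι ℂ).submatrix id e)ᴴ := by
  ext i j
  by_cases hi : i ∈ Set.range e
  · obtain ⟨k, rfl⟩ := hi
    simp only [realDiagonal, mul_apply, diagonal_apply, submatrix_apply, conjTranspose_apply,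
      one_apply, id, Function.comp_apply]
    rw [Fintype.sum_eq_single k]
    · simp [he.eq_iff, eq_comm]
    · intro l hl
      simp [he.eq_iff, Ne.symm hl]
  · simp only [Set.mem_range, not_exists] at hi
    simp [realDiagonal, mul_apply, one_apply, diagonal_apply, ha i (by simpa using hi),
      Ne.symm (hi _)]

end RealDiagonal

variable {ι κ : Type*} [Fintype ι] [DecidableEq ι]

lemma PosSemidef.one_le_det_one_add {S : Matrix ι ι ℂ} (hS : S.PosSemidef) : 1 ≤ (1 + S).det := by
  set U : Matrix ι ι ℂ := (hS.1.eigenvectorUnitary : Matrix ι ι ℂ)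
  have hU : star U * U = 1 := Unitary.star_mul_self_of_mem hS.1.eigenvectorUnitary.2
  have hdet : (1 + S).det = ∏ i, (1 + (hS.1.eigenvalues i : ℂ)) := by
    conv_lhs => rw [hS.1.spectral_theorem, Unitary.conjStarAlgAut_apply]
    rw [Matrix.mul_assoc, det_one_add_mul_comm, Matrix.mul_assoc, hU, Matrix.mul_one,
      ← diagonal_one, diagonal_add, det_diagonal]
    rfl
  rw [hdet]
  exact Finset.one_le_prod fun i _ =>
    le_add_of_nonneg_right (Complex.zero_le_real.mpr (hS.eigenvalues_nonneg i))

open scoped MatrixOrder in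
lemma PosDef.det_le_det {X Y : Matrix ι ι ℂ} (hX : X.PosDef) (hXY : (Y - X).PosSemidef) :
    X.det ≤ Y.det := by
  set S := CFC.sqrt X
  have hS : S.IsHermitian := (CFC.sqrt_nonneg X).posSemidef.1
  have hSS : S * S = X := CFC.sqrt_mul_sqrt_self X hX.posSemidef.nonneg
  have hSunit : IsUnit S.det := by
    refine isUnit_iff_ne_zero.mpr fun h => hX.det_pos.ne' ?_
    rw [← hSS, det_mul, h, zero_mul]
  set Z := S⁻¹ * (Y - X) * S⁻¹
  have hZ : Z.PosSemidef := by
    simpa [conjTranspose_nonsing_inv, hS.eq] using hXY.conjTranspose_mul_mul_same S⁻¹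
  have hY : Y = S * (1 + Z) * S := by
    have h1 : S * Z * S = Y - X := by
      simp only [Z, ← Matrix.mul_assoc, mul_nonsing_inv S hSunit, Matrix.one_mul]
      rw [Matrix.mul_assoc, nonsing_inv_mul S hSunit, Matrix.mul_one]
    rw [Matrix.mul_add, Matrix.add_mul, Matrix.mul_one, hSS, h1, add_sub_cancel]
  calc X.det = X.det * 1 := (mul_one _).symm
    _ ≤ X.det * (1 + Z).det := mul_le_mul_of_nonneg_left hZ.one_le_det_one_add hX.det_pos.le
    _ = Y.det := by rw [hY, det_mul, det_mul, ← hSS, det_mul]; ring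

lemma det_one_add_realDiagonal_mul {a : ι → ℝ} (ha : 0 ≤ a) (N : Matrix ι ι ℂ) :
    (1 + realDiagonal a * N).det =
      (1 + realDiagonal (fun i => √(a i)) * N * realDiagonal (fun i => √(a i))).det := by
  rw [← realDiagonal_sqrt_mul_self ha, Matrix.mul_assoc, det_one_add_mul_comm, Matrix.mul_assoc]

lemma det_one_add_realDiagonal_mul_le {a : ι → ℝ} (ha : 0 ≤ a) {N₁ N₂ : Matrix ι ι ℂ}
    (hN₁ : N₁.PosSemidef) (hN : (N₂ - N₁).PosSemidef) :
    (1 + realDiagonal a * N₁).det ≤ (1 + realDiagonal a * N₂).det := by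
  rw [det_one_add_realDiagonal_mul ha, det_one_add_realDiagonal_mul ha]
  set s := realDiagonal fun i => √(a i)
  have hs : sᴴ = s := conjTranspose_realDiagonal _
  refine PosDef.det_le_det (PosDef.one.add_posSemidef ?_) ?_
  · simpa [hs] using hN₁.conjTranspose_mul_mul_same s
  · convert hN.conjTranspose_mul_mul_same s using 1
    rw [hs]
    noncomm_ring

lemma det_one_add_realDiagonal_mul_comm (a b : ι → ℝ) (C : Matrix ι ι ℂ) :
    (1 + realDiagonal a * C * realDiagonal b * Cᴴ).det =
      (1 + realDiagonal b * Cᴴ * realDiagonal a * C).det := by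
  rw [Matrix.mul_assoc (realDiagonal a * C), det_one_add_mul_comm, ← Matrix.mul_assoc]

lemma det_one_add_realDiagonal_mul_le_peel {a b : ι → ℝ} {β : ℝ} (ha : 0 ≤ a) (hβ : 0 ≤ β)
    (hβb : ∀ i, β ≤ b i) {C : Matrix ι ι ℂ} (hC : (1 - C * Cᴴ).PosSemidef) :
    (1 + realDiagonal a * C * realDiagonal b * Cᴴ).det ≤
      ((∏ i, (1 + β * a i) : ℝ) : ℂ) *
        (1 + realDiagonal (fun i => a i / (1 + β * a i)) * C *
          realDiagonal (fun i => b i - β) * Cᴴ).det := by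
  set a' := fun i => a i / (1 + β * a i)
  set b' := fun i => b i - β
  have hpos : ∀ i, 0 < 1 + β * a i := fun i => by nlinarith [mul_nonneg hβ (ha i)]
  have hsplit : C * realDiagonal b * Cᴴ = β • (C * Cᴴ) + C * realDiagonal b' * Cᴴ := by
    rw [realDiagonal_eq_smul_one_add β b]
    simp only [Matrix.mul_add, Matrix.add_mul, Matrix.mul_smul, Matrix.smul_mul, Matrix.mul_one]
    rfl
  have hfactor : 1 + realDiagonal a * (β • 1 + C * realDiagonal b' * Cᴴ) =
      realDiagonal (fun i => 1 + β * a i) * (1 + realDiagonal a' * C * realDiagonal b' * Cᴴ) := by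
    have hmul : realDiagonal (fun i => 1 + β * a i) * realDiagonal a' = realDiagonal a := by
      rw [realDiagonal_mul_realDiagonal]
      congr 1
      ext i
      exact mul_div_cancel₀ _ (hpos i).ne'
    symm
    rw [Matrix.mul_add, Matrix.mul_one, ← Matrix.mul_assoc, ← Matrix.mul_assoc,
      ← Matrix.mul_assoc, hmul, realDiagonal_one_add_mul]
    noncomm_ring
  calc (1 + realDiagonal a * C * realDiagonal b * Cᴴ).det
      = (1 + realDiagonal a * (C * realDiagonal b * Cᴴ)).det := by simp only [Matrix.mul_assoc]
    _ ≤ (1 + realDiagonal a * (β • 1 + C * realDiagonal b' * Cᴴ)).det := by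
      refine det_one_add_realDiagonal_mul_le ha
        ((posSemidef_realDiagonal fun i => hβ.trans (hβb i)).mul_mul_conjTranspose_same C) ?_
      rw [hsplit, add_sub_add_right_eq_sub, ← smul_sub]
      exact hC.smul hβ
    _ = _ := by rw [hfactor, det_mul, det_realDiagonal]

lemma det_one_add_realDiagonal_mul_le_peel_peel {a b : ι → ℝ} (ha : 0 ≤ a) {α β : ℝ}
    (hβ : 0 ≤ β) (hβb : ∀ i, β ≤ b i) (hα : 0 ≤ α) (hαa : ∀ i, α ≤ a i / (1 + β * a i))
    {C : Matrix ι ι ℂ} (hC : (1 - Cᴴ * C).PosSemidef) (hC' : (1 - C * Cᴴ).PosSemidef) :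
    (1 + realDiagonal a * C * realDiagonal b * Cᴴ).det ≤
      ((∏ i, (1 + β * a i) * (1 + α * (b i - β)) : ℝ) : ℂ) *
        (1 + realDiagonal (fun i => a i / (1 + β * a i) - α) * C *
          realDiagonal (fun i => (b i - β) / (1 + α * (b i - β))) * Cᴴ).det := by
  have hpeel₂ := det_one_add_realDiagonal_mul_le_peel (fun i => sub_nonneg.mpr (hβb i)) hα hαa
    (C := Cᴴ) (by rwa [conjTranspose_conjTranspose])
  rw [conjTranspose_conjTranspose] at hpeel₂
  calc (1 + realDiagonal a * C * realDiagonal b * Cᴴ).det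
      ≤ ((∏ i, (1 + β * a i) : ℝ) : ℂ) *
          (1 + realDiagonal (fun i => a i / (1 + β * a i)) * C *
            realDiagonal (fun i => b i - β) * Cᴴ).det :=
        det_one_add_realDiagonal_mul_le_peel ha hβ hβb hC'
    _ ≤ ((∏ i, (1 + β * a i) : ℝ) : ℂ) * (((∏ i, (1 + α * (b i - β)) : ℝ) : ℂ) *
          (1 + realDiagonal (fun i => (b i - β) / (1 + α * (b i - β))) * Cᴴ *
            realDiagonal (fun i => a i / (1 + β * a i) - α) * C).det) := by
        rw [det_one_add_realDiagonal_mul_comm]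
        exact mul_le_mul_of_nonneg_left hpeel₂ (Complex.zero_le_real.mpr
          (Finset.prod_nonneg fun i _ => by nlinarith [mul_nonneg hβ (ha i)]))
    _ = _ := by
        rw [det_one_add_realDiagonal_mul_comm, Finset.prod_mul_distrib, Complex.ofReal_mul]
        ring

lemma one_submatrix_conjTranspose_mul_mul (e : κ → ι) (M : Matrix ι ι ℂ) :
    ((1 : Matrix ι ι ℂ).submatrix id e)ᴴ * M * (1 : Matrix ι ι ℂ).submatrix id e =
      M.submatrix e e := by
  ext k l
  simp [mul_apply, one_apply]

lemma det_one_add_realDiagonal_mul_eq_submatrix [Fintype κ] [DecidableEq κ] {e : κ → ι}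
    (he : Function.Injective e) {a b : ι → ℝ} (ha : ∀ i ∉ Set.range e, a i = 0)
    (hb : ∀ i ∉ Set.range e, b i = 0) (C : Matrix ι ι ℂ) :
    (1 + realDiagonal a * C * realDiagonal b * Cᴴ).det =
      (1 + realDiagonal (a ∘ e) * C.submatrix e e * realDiagonal (b ∘ e) *
        (C.submatrix e e)ᴴ).det := by
  set E := (1 : Matrix ι ι ℂ).submatrix id e
  have hC₀ : (C.submatrix e e)ᴴ = Eᴴ * Cᴴ * E := by
    rw [← one_submatrix_conjTranspose_mul_mul e C, conjTranspose_mul, conjTranspose_mul,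
      conjTranspose_conjTranspose, Matrix.mul_assoc]
  rw [realDiagonal_eq_one_submatrix_mul he ha, realDiagonal_eq_one_submatrix_mul he hb, hC₀,
    ← one_submatrix_conjTranspose_mul_mul e C]
  simp only [Matrix.mul_assoc]
  rw [det_one_add_mul_comm]
  simp only [Matrix.mul_assoc]
  rfl

lemma posSemidef_one_sub_conjTranspose_submatrix_mul [Fintype κ] [DecidableEq κ] {e : κ → ι}
    (he : Function.Injective e) {C : Matrix ι ι ℂ} (hC : (1 - Cᴴ * C).PosSemidef) :
    (1 - (C.submatrix e e)ᴴ * C.submatrix e e).PosSemidef := by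
  set E := (1 : Matrix ι ι ℂ).submatrix id e
  set P := 1 - E * Eᴴ
  have hE : Eᴴ * E = 1 := by
    rw [← Matrix.mul_one Eᴴ, one_submatrix_conjTranspose_mul_mul, submatrix_one e he]
  have hP : Pᴴ * P = P := by
    rw [show Pᴴ = P by simp [P]]
    simp only [P, Matrix.sub_mul, Matrix.mul_sub, Matrix.one_mul, Matrix.mul_one]
    rw [Matrix.mul_assoc, ← Matrix.mul_assoc Eᴴ, hE, Matrix.one_mul, sub_self, sub_zero]
  have hsplit : 1 - (C.submatrix e e)ᴴ * C.submatrix e e =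
      Eᴴ * (1 - Cᴴ * C) * E + (P * C * E)ᴴ * (P * C * E) := by
    have hPCE : (P * C * E)ᴴ * (P * C * E) = Eᴴ * Cᴴ * (Pᴴ * P) * C * E := by
      simp only [conjTranspose_mul, Matrix.mul_assoc]
    have hEE : Eᴴ * (1 - Cᴴ * C) * E = 1 - Eᴴ * Cᴴ * C * E := by
      rw [Matrix.mul_sub, Matrix.sub_mul, Matrix.mul_one, hE]
      simp only [Matrix.mul_assoc]
    rw [hPCE, hP, hEE, ← one_submatrix_conjTranspose_mul_mul e C, conjTranspose_mul,
      conjTranspose_mul, conjTranspose_conjTranspose]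
    simp only [P, E, Matrix.mul_sub, Matrix.sub_mul, Matrix.mul_one, Matrix.mul_assoc]
    abel
  rw [hsplit]
  exact (hC.conjTranspose_mul_mul_same E).add (posSemidef_conjTranspose_mul_self _)

lemma posSemidef_one_sub_submatrix_mul_conjTranspose [Fintype κ] [DecidableEq κ] {e : κ → ι}
    (he : Function.Injective e) {C : Matrix ι ι ℂ} (hC : (1 - C * Cᴴ).PosSemidef) :
    (1 - C.submatrix e e * (C.submatrix e e)ᴴ).PosSemidef := by
  simpa [conjTranspose_submatrix] using
    posSemidef_one_sub_conjTranspose_submatrix_mul he (C := Cᴴ) (by simpa using hC)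

lemma det_one_add_realDiagonal_mul_eq_castSucc {m : ℕ} {a b : Fin (m + 1) → ℝ}
    (ha : a (Fin.last m) = 0) (hb : b (Fin.last m) = 0) (C : Matrix (Fin (m + 1)) (Fin (m + 1)) ℂ) :
    (1 + realDiagonal a * C * realDiagonal b * Cᴴ).det =
      (1 + realDiagonal (a ∘ Fin.castSucc) * C.submatrix Fin.castSucc Fin.castSucc *
        realDiagonal (b ∘ Fin.castSucc) * (C.submatrix Fin.castSucc Fin.castSucc)ᴴ).det := by
  have hlast : ∀ i ∉ Set.range (Fin.castSucc : Fin m → Fin (m + 1)), i = Fin.last m := by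
    intro i hi
    obtain ⟨j, rfl⟩ | rfl := i.eq_castSucc_or_eq_last
    · exact absurd ⟨j, rfl⟩ hi
    · rfl
  exact det_one_add_realDiagonal_mul_eq_submatrix (Fin.castSucc_injective m)
    (fun i hi => hlast i hi ▸ ha) (fun i hi => hlast i hi ▸ hb) C

theorem det_one_add_realDiagonal_mul_le_prod {n : ℕ} {a b : Fin n → ℝ} (ha₀ : 0 ≤ a)
    (hb₀ : 0 ≤ b) (ha : Antitone a) (hb : Antitone b) {C : Matrix (Fin n) (Fin n) ℂ}
    (hC : (1 - Cᴴ * C).PosSemidef) (hC' : (1 - C * Cᴴ).PosSemidef) :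
    (1 + realDiagonal a * C * realDiagonal b * Cᴴ).det ≤ ((∏ i, (1 + a i * b i) : ℝ) : ℂ) := by
  induction n with
  | zero => simp
  | succ m ih =>
    set β := b (Fin.last m)
    set a' := fun i => a i / (1 + β * a i)
    set α := a' (Fin.last m)
    set a'' := fun i => a' i - α
    set b'' := fun i => (b i - β) / (1 + α * (b i - β))
    have hβ : 0 ≤ β := hb₀ _
    have hβb : ∀ i, β ≤ b i := fun i => hb (Fin.le_last i)
    have hpos_a : ∀ i, 0 < 1 + β * a i := fun i => by nlinarith [mul_nonneg hβ (ha₀ i)]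
    have ha' : Antitone a' := antitone_div_one_add_mul ha ha₀ hβ
    have hαa' : ∀ i, α ≤ a' i := fun i => ha' (Fin.le_last i)
    have hα : 0 ≤ α := div_nonneg (ha₀ _) (hpos_a _).le
    have hpos_b : ∀ i, 0 < 1 + α * (b i - β) := fun i => by
      nlinarith [mul_nonneg hα (sub_nonneg.mpr (hβb i))]
    have hb'' : Antitone b'' :=
      antitone_div_one_add_mul (hb.add_const (-β)) (fun i => sub_nonneg.mpr (hβb i)) hα
    have hpeeled : (1 + realDiagonal a'' * C * realDiagonal b'' * Cᴴ).det ≤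
        ((∏ i, (1 + a'' i * b'' i) : ℝ) : ℂ) := by
      have ha''_last : a'' (Fin.last m) = 0 := sub_self α
      have hb''_last : b'' (Fin.last m) = 0 := by simp [b'', β]
      rw [det_one_add_realDiagonal_mul_eq_castSucc ha''_last hb''_last, Fin.prod_univ_castSucc,
        ha''_last, zero_mul, add_zero, mul_one]
      exact ih (fun i => sub_nonneg.mpr (hαa' _))
        (fun i => div_nonneg (sub_nonneg.mpr (hβb _)) (hpos_b _).le)
        ((ha'.add_const (-α)).comp_monotone Fin.strictMono_castSucc.monotone)
        (hb''.comp_monotone Fin.strictMono_castSucc.monotone)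
        (posSemidef_one_sub_conjTranspose_submatrix_mul (Fin.castSucc_injective m) hC)
        (posSemidef_one_sub_submatrix_mul_conjTranspose (Fin.castSucc_injective m) hC')
    calc (1 + realDiagonal a * C * realDiagonal b * Cᴴ).det
        ≤ ((∏ i, (1 + β * a i) * (1 + α * (b i - β)) : ℝ) : ℂ) *
            (1 + realDiagonal a'' * C * realDiagonal b'' * Cᴴ).det :=
          det_one_add_realDiagonal_mul_le_peel_peel ha₀ hβ hβb hα hαa' hC hC'
      _ ≤ ((∏ i, (1 + β * a i) * (1 + α * (b i - β)) : ℝ) : ℂ) *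
            ((∏ i, (1 + a'' i * b'' i) : ℝ) : ℂ) :=
          mul_le_mul_of_nonneg_left hpeeled (Complex.zero_le_real.mpr
            (Finset.prod_nonneg fun i _ => mul_nonneg (hpos_a i).le (hpos_b i).le))
      _ = ((∏ i, (1 + a i * b i) : ℝ) : ℂ) := by
          rw [← Complex.ofReal_mul, ← Finset.prod_mul_distrib]
          exact congrArg _ (Finset.prod_congr rfl fun i _ =>
            one_add_mul_eq_peel_peel (hpos_a i).ne' (hpos_b i).ne')

lemma det_one_add_svd_mul_mul_conjTranspose {W : Matrix ι ι ℂ} (hW : W ∈ unitaryGroup ι ℂ)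
    (σ : ι → ℝ) (V Q : Matrix ι ι ℂ) :
    (1 + W * realDiagonal σ * Vᴴ * Q * (W * realDiagonal σ * Vᴴ)ᴴ).det =
      (1 + realDiagonal (fun i => σ i ^ 2) * (Vᴴ * Q * V)).det := by
  have hσσ : realDiagonal σ * realDiagonal σ = realDiagonal fun i => σ i ^ 2 := by
    rw [realDiagonal_mul_realDiagonal]
    congr 1
    ext i
    exact (sq (σ i)).symm
  have hWW : Wᴴ * W = 1 := Unitary.star_mul_self_of_mem hW
  calc (1 + W * realDiagonal σ * Vᴴ * Q * (W * realDiagonal σ * Vᴴ)ᴴ).det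
      = (1 + W * (realDiagonal σ * (Vᴴ * Q * V * realDiagonal σ) * Wᴴ)).det := by
        simp only [conjTranspose_mul, conjTranspose_conjTranspose, conjTranspose_realDiagonal,
          Matrix.mul_assoc]
    _ = (1 + realDiagonal σ * (Vᴴ * Q * V * realDiagonal σ)).det := by
        rw [det_one_add_mul_comm, Matrix.mul_assoc, hWW, Matrix.mul_one]
    _ = _ := by
        rw [det_one_add_mul_comm, Matrix.mul_assoc, det_one_add_mul_comm, hσσ]

end Matrix

theorem logdet_signal_upper_bound_general
    (n : ℕ) (G Qs : Matrix (Fin n) (Fin n) ℂ)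
    (W V T : Matrix (Fin n) (Fin n) ℂ)
    (hW : W ∈ Matrix.unitaryGroup (Fin n) ℂ)
    (hV : V ∈ Matrix.unitaryGroup (Fin n) ℂ)
    (hT : T ∈ Matrix.unitaryGroup (Fin n) ℂ)
    (σ p : Fin n → ℝ)
    (hσpos : ∀ i, 0 ≤ σ i) (hσord : Antitone σ)
    (hppos : ∀ i, 0 ≤ p i) (hpord : Antitone p)
    (hsvd : G = W * Matrix.diagonal (fun i => (σ i : ℂ)) * Vᴴ)
    (hspec : Qs = T * Matrix.diagonal (fun i => (p i : ℂ)) * Tᴴ) :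
    Real.log ((1 + G * Qs * Gᴴ).det.re) ≤
      ∑ i, Real.log (1 + σ i ^ 2 * p i) := by
  change G = W * realDiagonal σ * Vᴴ at hsvd
  change Qs = T * realDiagonal p * Tᴴ at hspec
  have hU : Vᴴ * T ∈ unitaryGroup (Fin n) ℂ := mul_mem (Unitary.star_mem hV) hT
  have hUU : (Vᴴ * T)ᴴ * (Vᴴ * T) = 1 := Unitary.star_mul_self_of_mem hU
  have hUU' : Vᴴ * T * (Vᴴ * T)ᴴ = 1 := Unitary.mul_star_self_of_mem hU
  have hdet : (1 + G * Qs * Gᴴ).det =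
      (1 + realDiagonal (fun i => σ i ^ 2) * (Vᴴ * T) * realDiagonal p * (Vᴴ * T)ᴴ).det := by
    rw [hsvd, hspec, det_one_add_svd_mul_mul_conjTranspose hW, conjTranspose_mul,
      conjTranspose_conjTranspose]
    simp only [Matrix.mul_assoc]
  have hle := det_one_add_realDiagonal_mul_le_prod (fun i => sq_nonneg (σ i)) hppos
    (fun i j hij => pow_le_pow_left₀ (hσpos j) (hσord hij) 2) hpord
    (by rw [hUU, sub_self]; exact .zero) (by rw [hUU', sub_self]; exact .zero)
  rw [← hdet] at hle
  have hQs : Qs.PosSemidef := hspec ▸ (posSemidef_realDiagonal hppos).mul_mul_conjTranspose_same T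
  have hpos : 0 < (1 + G * Qs * Gᴴ).det :=
    (PosDef.one.add_posSemidef (hQs.mul_mul_conjTranspose_same G)).det_pos
  rw [← Real.log_prod fun i _ =>
    (add_pos_of_pos_of_nonneg one_pos (mul_nonneg (sq_nonneg _) (hppos i))).ne']
  exact Real.log_le_log (Complex.pos_iff.mp hpos).1 (Complex.le_def.mp hle).1

/-- Upper bound on Eve's rate: for invertible `G` with singular values
`σ₁ ≥ ... ≥ σₙ` (given by an SVD `G = W · diag σ · Vᴴ`) and positive
semidefinite `Qs` with eigenvalues `p₁ ≥ ... ≥ pₙ` (given by a spectral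
decomposition `Qs = T · diag p · Tᴴ`),
`log det (I + G Qs Gᴴ) ≤ ∑ i, log (1 + σᵢ² pᵢ)`. -/
theorem logdet_signal_upper_bound
    (n : ℕ) (G Qs : Matrix (Fin n) (Fin n) ℂ)
    (hG : IsUnit G.det)
    (W V T : Matrix (Fin n) (Fin n) ℂ)
    (hW : W ∈ Matrix.unitaryGroup (Fin n) ℂ)
    (hV : V ∈ Matrix.unitaryGroup (Fin n) ℂ)
    (hT : T ∈ Matrix.unitaryGroup (Fin n) ℂ)
    (σ p : Fin n → ℝ)
    (hσpos : ∀ i, 0 ≤ σ i) (hσord : Antitone σ)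
    (hppos : ∀ i, 0 ≤ p i) (hpord : Antitone p)
    (hsvd : G = W * Matrix.diagonal (fun i => (σ i : ℂ)) * Vᴴ)
    (hspec : Qs = T * Matrix.diagonal (fun i => (p i : ℂ)) * Tᴴ) :
    Real.log ((1 + G * Qs * Gᴴ).det.re) ≤
      ∑ i, Real.log (1 + σ i ^ 2 * p i) :=
  logdet_signal_upper_bound_general n G Qs W V T hW hV hT σ p hσpos hσord hppos hpord hsvd hspec
end

section
/- Let H be an n×n complex matrix with SVD H = W D T†, D = diag(d_1,...,d_n). Let Q_s = T diag(p_1,...,p_n) T† and Q_a = T diag(β_1,...,β_n) T† with p_i, β_i ≥ 0 and p_i β_i = 0 for all i. Then log det(I + (σ²I + H Q_a H†)^{-1} H Q_s H†) = Σ_{i: p_i > 0} log(1 + d_i² p_i / σ²). -/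
open Matrix ComplexOrder

/-! Both covariances are diagonal in the right singular basis `T`, so `H Qs Hᴴ` and
`s I + H Qa Hᴴ` are simultaneously diagonalised by `W`, with eigenvalues `dᵢ² pᵢ` and
`s + dᵢ² βᵢ`. The determinant is then the product of `1 + dᵢ² pᵢ / (s + dᵢ² βᵢ)`, and
disjointness of the supports makes `βᵢ = 0` wherever `pᵢ > 0`, while modes with `pᵢ = 0`
contribute a factor `1`. -/

namespace Matrix

variable {n R : Type*} [Fintype n] [DecidableEq n]

theorem svd_mul_conj_mul_conjTranspose [Semiring R] [StarRing R] {T : Matrix n n R}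
    (hT : Tᴴ * T = 1) (W D X : Matrix n n R) :
    W * D * Tᴴ * (T * X * Tᴴ) * (W * D * Tᴴ)ᴴ = W * (D * X * Dᴴ) * Wᴴ := by
  simp only [conjTranspose_mul, conjTranspose_conjTranspose, Matrix.mul_assoc]
  rw [← Matrix.mul_assoc Tᴴ T, hT, Matrix.one_mul, ← Matrix.mul_assoc Tᴴ T, hT, Matrix.one_mul]

section UnitaryConj

variable [CommRing R] [StarRing R] {U : Matrix n n R}

theorem smul_one_add_unitary_conj (hU : U ∈ unitaryGroup n R) (c : R) (A : Matrix n n R) :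
    c • 1 + U * A * Uᴴ = U * (c • 1 + A) * Uᴴ := by
  have hUU : U * Uᴴ = 1 := mem_unitaryGroup_iff.mp hU
  rw [Matrix.mul_add, Matrix.add_mul, Matrix.mul_smul, Matrix.smul_mul, Matrix.mul_one, hUU]

theorem inv_unitary_conj (hU : U ∈ unitaryGroup n R) (A : Matrix n n R) :
    (U * A * Uᴴ)⁻¹ = U * A⁻¹ * Uᴴ := by
  have hUinv : U⁻¹ = Uᴴ := inv_eq_left_inv (mem_unitaryGroup_iff'.mp hU)
  have hUHinv : Uᴴ⁻¹ = U := inv_eq_left_inv (mem_unitaryGroup_iff.mp hU)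
  rw [mul_inv_rev, mul_inv_rev, hUinv, hUHinv, Matrix.mul_assoc]

theorem det_one_add_inv_mul_unitary_conj (hU : U ∈ unitaryGroup n R) (A B : Matrix n n R) :
    det (1 + (U * A * Uᴴ)⁻¹ * (U * B * Uᴴ)) = det (1 + A⁻¹ * B) := by
  have hUHU : Uᴴ * U = 1 := mem_unitaryGroup_iff'.mp hU
  have hUU : U * Uᴴ = 1 := mem_unitaryGroup_iff.mp hU
  have hconj : 1 + (U * A * Uᴴ)⁻¹ * (U * B * Uᴴ) = U * (1 + A⁻¹ * B) * Uᴴ := by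
    rw [inv_unitary_conj hU, Matrix.mul_add, Matrix.add_mul, Matrix.mul_one, hUU]
    simp only [Matrix.mul_assoc]
    rw [← Matrix.mul_assoc Uᴴ U, hUHU, Matrix.one_mul]
  rw [hconj, det_mul, det_mul, mul_right_comm, ← det_mul, hUU, det_one, one_mul]

end UnitaryConj

theorem det_one_add_inv_diagonal_mul_diagonal {K : Type*} [Field K] {a : n → K}
    (ha : ∀ i, a i ≠ 0) (b : n → K) :
    det (1 + (diagonal a)⁻¹ * diagonal b) = ∏ i, (1 + b i / a i) := by
  have hinv : (diagonal a)⁻¹ = diagonal a⁻¹ := by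
    refine inv_eq_left_inv ?_
    rw [diagonal_mul_diagonal, ← diagonal_one]
    exact congrArg diagonal (funext fun i => inv_mul_cancel₀ (ha i))
  rw [hinv, diagonal_mul_diagonal, ← diagonal_one, diagonal_add, det_diagonal]
  exact Finset.prod_congr rfl fun i _ => by simp [div_eq_inv_mul]

end Matrix

theorem one_add_sq_mul_div_eq_ite {d p β s : ℝ} (hp : 0 ≤ p) (hpβ : p * β = 0) :
    1 + d ^ 2 * p / (s + d ^ 2 * β) = if 0 < p then 1 + d ^ 2 * p / s else 1 := by
  split_ifs with hpos
  · rw [(mul_eq_zero.mp hpβ).resolve_left hpos.ne', mul_zero, add_zero]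
  · simp [le_antisymm (not_lt.mp hpos) hp]

theorem bob_rate_decouples_with_an_general
    (n : ℕ) (H W T Qs Qa : Matrix (Fin n) (Fin n) ℂ)
    (hW : W ∈ Matrix.unitaryGroup (Fin n) ℂ)
    (hT : T ∈ Matrix.unitaryGroup (Fin n) ℂ)
    (d p β : Fin n → ℝ) (s : ℝ) (hs : 0 < s)
    (hp : ∀ i, 0 ≤ p i) (hβ : ∀ i, 0 ≤ β i)
    (hdisj : ∀ i, p i * β i = 0)
    (hH : H = W * Matrix.diagonal (fun i => (d i : ℂ)) * Tᴴ)
    (hQs : Qs = T * Matrix.diagonal (fun i => (p i : ℂ)) * Tᴴ)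
    (hQa : Qa = T * Matrix.diagonal (fun i => (β i : ℂ)) * Tᴴ) :
    Real.log ((1 + ((s : ℂ) • 1 + H * Qa * Hᴴ)⁻¹ * (H * Qs * Hᴴ)).det.re) =
      ∑ i ∈ Finset.univ.filter (fun i => 0 < p i),
        Real.log (1 + d i ^ 2 * p i / s) := by
  have hsandwich (q : Fin n → ℝ) : H * (T * diagonal (fun i => (q i : ℂ)) * Tᴴ) * Hᴴ =
      W * diagonal (fun i => ((d i ^ 2 * q i : ℝ) : ℂ)) * Wᴴ := by
    rw [hH, svd_mul_conj_mul_conjTranspose (mem_unitaryGroup_iff'.mp hT),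
      diagonal_conjTranspose, diagonal_mul_diagonal, diagonal_mul_diagonal]
    congr 3
    funext i
    simp only [Pi.star_apply, Complex.star_def, Complex.conj_ofReal]
    push_cast
    ring
  have hnoise : (s : ℂ) • 1 + H * Qa * Hᴴ =
      W * diagonal (fun i => ((s + d i ^ 2 * β i : ℝ) : ℂ)) * Wᴴ := by
    rw [hQa, hsandwich, smul_one_add_unitary_conj hW, smul_one_eq_diagonal, diagonal_add]
    push_cast
    rfl
  have hnoise_pos (i : Fin n) : 0 < s + d i ^ 2 * β i := by positivity [hβ i]
  rw [hnoise, hQs, hsandwich, det_one_add_inv_mul_unitary_conj hW,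
    det_one_add_inv_diagonal_mul_diagonal (fun i => by exact_mod_cast (hnoise_pos i).ne')]
  have hfactor : ∏ i, (1 + ((d i ^ 2 * p i : ℝ) : ℂ) / ((s + d i ^ 2 * β i : ℝ) : ℂ)) =
      ((∏ i, (if 0 < p i then 1 + d i ^ 2 * p i / s else 1) : ℝ) : ℂ) := by
    simp only [← one_add_sq_mul_div_eq_ite (hp _) (hdisj _)]
    push_cast
    rfl
  rw [hfactor, Complex.ofReal_re, ← Finset.prod_filter,
    Real.log_prod fun i hi => by positivity [hp i, (Finset.mem_filter.mp hi).2]]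

/-- SVD precoding with artificial noise on the complementary modes does not
degrade Bob's rate: with `H = W · diag d · Tᴴ`, `Qs = T · diag p · Tᴴ`,
`Qa = T · diag β · Tᴴ`, `pᵢ, βᵢ ≥ 0`, `pᵢ βᵢ = 0`, and noise variance `s > 0`,
`log det (I + (s I + H Qa Hᴴ)⁻¹ H Qs Hᴴ) = ∑_{i : pᵢ > 0} log (1 + dᵢ² pᵢ / s)`. -/
theorem bob_rate_decouples_with_an
    (n : ℕ) (H W T Qs Qa : Matrix (Fin n) (Fin n) ℂ)
    (hW : W ∈ Matrix.unitaryGroup (Fin n) ℂ)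
    (hT : T ∈ Matrix.unitaryGroup (Fin n) ℂ)
    (d p β : Fin n → ℝ) (s : ℝ) (hs : 0 < s)
    (hd : ∀ i, 0 ≤ d i)
    (hp : ∀ i, 0 ≤ p i) (hβ : ∀ i, 0 ≤ β i)
    (hdisj : ∀ i, p i * β i = 0)
    (hH : H = W * Matrix.diagonal (fun i => (d i : ℂ)) * Tᴴ)
    (hQs : Qs = T * Matrix.diagonal (fun i => (p i : ℂ)) * Tᴴ)
    (hQa : Qa = T * Matrix.diagonal (fun i => (β i : ℂ)) * Tᴴ) :
    Real.log ((1 + ((s : ℂ) • 1 + H * Qa * Hᴴ)⁻¹ * (H * Qs * Hᴴ)).det.re) =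
      ∑ i ∈ Finset.univ.filter (fun i => 0 < p i),
        Real.log (1 + d i ^ 2 * p i / s) :=
  bob_rate_decouples_with_an_general n H W T Qs Qa hW hT d p β s hs hp hβ hdisj hH hQs hQa
end
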